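/- Let λ ∈ ℂ ∪ {∞}. Every symmetric invariant bilinear form on W_B(λ) is identically zero. The space of symmetric invariant bilinear forms on W_A(λ) is one-dimensional, spanned by the form θ_A determined by θ_A(A_0, A_0) = 1 and θ_A vanishing on all other pairs of basis vectors (i.e., θ_A(L_n, L_m) = θ_A(L_n, A_m) = 0 for all n, m, and θ_A(A_n, A_m) = 0 unless n = m = 0). -/

import Mathlib

/-!
Write `Lₙ = b (Sum.inl n)`, `Xₙ = b (Sum.inr n)` and `[Lₐ, X_b] = c(a, b) X_{a+b}`; in both
algebras `c(0, m) = m`, so `ad L₀` acts diagonally with weight `n` on `Lₙ` and `Xₙ`. For an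
invariant form, eigenvectors of `ad L₀` with weights `a`, `a'` are orthogonal unless `a + a' = 0`.
Invariance on suitable triples kills the remaining pairings `θ(Lₙ, L₋ₙ)`, `θ(Lₙ, X₋ₙ)` and
`θ(Xₙ, X₋ₙ)` for `n ≠ 0`, while `θ(X₀, X₀)` only satisfies `c(a, -a) θ(X₀, X₀) = 0`. In `W_B(λ)`
some `c(a, -a)` is nonzero, so `θ = 0`. In `W_A(λ)` every `c(a, -a)` vanishes, so `X₀` has zero
coordinate in every bracket and the square of that coordinate is an invariant form.
-/

/-- The coefficient `n(n+1)λ`, where `λ = ∞` (encoded by `none`) gives `n²`. -/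
def lamTerm (lam : Option ℂ) (n : ℤ) : ℂ :=
  match lam with
  | some l => (n : ℂ) * ((n : ℂ) + 1) * l
  | none => (n : ℂ) ^ 2

open LinearMap.BilinForm

theorem LieAlgebra.invariant_form_apply_eq_zero_of_eigen {K L : Type*} [Field K] [LieRing L]
    [LieAlgebra K L] {θ : L →ₗ[K] L →ₗ[K] K} (hθ : ∀ x y z, θ ⁅x, y⁆ z = θ x ⁅y, z⁆)
    {h u v : L} {a a' : K} (hu : ⁅h, u⁆ = a • u) (hv : ⁅h, v⁆ = a' • v) (ha : a + a' ≠ 0) :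
    θ u v = 0 := by
  have key : θ ⁅u, h⁆ v = θ u ⁅h, v⁆ := hθ u h v
  rw [← lie_skew, hu, hv] at key
  simp only [map_neg, map_smul, LinearMap.neg_apply, LinearMap.smul_apply, smul_eq_mul] at key
  exact (mul_eq_zero.mp (by linear_combination -key : (a + a') * θ u v = 0)).resolve_left ha

namespace WittExtension

variable {K L : Type*} [Field K] [LieRing L] [LieAlgebra K L]
  {b : Module.Basis (ℤ ⊕ ℤ) K L} {c : ℤ → ℤ → K} {θ : L →ₗ[K] L →ₗ[K] K}

theorem apply_inl_inl_eq_zero [CharZero K]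
    (hLL : ∀ n m : ℤ, ⁅b (Sum.inl n), b (Sum.inl m)⁆ = ((m : K) - n) • b (Sum.inl (n + m)))
    (hθ : ∀ x y z, θ ⁅x, y⁆ z = θ x ⁅y, z⁆) (n m : ℤ) :
    θ (b (Sum.inl n)) (b (Sum.inl m)) = 0 := by
  have hL₀ : ∀ m : ℤ, ⁅b (Sum.inl 0), b (Sum.inl m)⁆ = (m : K) • b (Sum.inl m) := fun m => by
    simp [hLL]
  rcases eq_or_ne (n + m) 0 with hnm | hnm
  swap
  · exact LieAlgebra.invariant_form_apply_eq_zero_of_eigen hθ (hL₀ n) (hL₀ m)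
      (by exact_mod_cast hnm)
  obtain rfl : m = -n := by omega
  have key : ∀ p q : ℤ, ((q : K) - p) * θ (b (Sum.inl (p + q))) (b (Sum.inl (-(p + q)))) =
      (-p - 2 * q) * θ (b (Sum.inl p)) (b (Sum.inl (-p))) := fun p q => by
    have h := hθ (b (Sum.inl p)) (b (Sum.inl q)) (b (Sum.inl (-(p + q))))
    rw [hLL, hLL, show q + -(p + q) = -p by ring] at h
    simp only [map_smul, LinearMap.smul_apply, smul_eq_mul] at h
    push_cast at h
    linear_combination h
  have h₁ : θ (b (Sum.inl 1)) (b (Sum.inl (-1))) = 0 := by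
    have := key 1 1
    norm_num at this
    exact this
  have h₀ : θ (b (Sum.inl 0)) (b (Sum.inl (-0))) = 0 := by
    have := key 0 1
    norm_num [h₁] at this
    exact this
  rcases eq_or_ne n 0 with rfl | hn
  · exact h₀
  have := key 0 n
  simp only [zero_add, h₀, mul_zero, Int.cast_zero, sub_zero, mul_eq_zero] at this
  exact this.resolve_left (by exact_mod_cast hn)

theorem apply_inl_inr_eq_zero [CharZero K]
    (hLL : ∀ n m : ℤ, ⁅b (Sum.inl n), b (Sum.inl m)⁆ = ((m : K) - n) • b (Sum.inl (n + m)))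
    (hLX : ∀ n m : ℤ, ⁅b (Sum.inl n), b (Sum.inr m)⁆ = c n m • b (Sum.inr (n + m)))
    (hc₀ : ∀ m : ℤ, c 0 m = m) (hc : c (-1) 0 * c 1 (-1) ≠ -2)
    (hθ : ∀ x y z, θ ⁅x, y⁆ z = θ x ⁅y, z⁆) (n m : ℤ) :
    θ (b (Sum.inl n)) (b (Sum.inr m)) = 0 := by
  rcases eq_or_ne (n + m) 0 with hnm | hnm
  swap
  · exact LieAlgebra.invariant_form_apply_eq_zero_of_eigen hθ (h := b (Sum.inl 0))
      (a := n) (a' := m) (by simp [hLL]) (by simp [hLX, hc₀]) (by exact_mod_cast hnm)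
  obtain rfl : m = -n := by omega
  have key : ∀ p q r : ℤ, ((q : K) - p) * θ (b (Sum.inl (p + q))) (b (Sum.inr r)) =
      c q r * θ (b (Sum.inl p)) (b (Sum.inr (q + r))) := fun p q r => by
    have h := hθ (b (Sum.inl p)) (b (Sum.inl q)) (b (Sum.inr r))
    rw [hLL, hLX] at h
    simpa only [map_smul, LinearMap.smul_apply, smul_eq_mul] using h
  have hG : ∀ n : ℤ, (n : K) * θ (b (Sum.inl n)) (b (Sum.inr (-n))) =
      c n (-n) * θ (b (Sum.inl 0)) (b (Sum.inr 0)) := fun n => by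
    simpa using key 0 n (-n)
  -- invariance on `(L₁, L₋₁, X₀)` gives `-2 θ(L₀, X₀) = c(-1, 0) c(1, -1) θ(L₀, X₀)`
  have h₀ : θ (b (Sum.inl 0)) (b (Sum.inr 0)) = 0 := by
    have h := key 1 (-1) 0
    have h₁ := hG 1
    norm_num at h h₁
    rw [h₁] at h
    exact (mul_eq_zero.mp (by linear_combination -h : (c (-1) 0 * c 1 (-1) + 2) *
      θ (b (Sum.inl 0)) (b (Sum.inr 0)) = 0)).resolve_left
      (fun h' => hc (by linear_combination h'))
  rcases eq_or_ne n 0 with rfl | hn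
  · simpa using h₀
  have := hG n
  rw [h₀, mul_zero, mul_eq_zero] at this
  exact this.resolve_left (by exact_mod_cast hn)

theorem mul_apply_inr_inr_eq_zero
    (hLX : ∀ n m : ℤ, ⁅b (Sum.inl n), b (Sum.inr m)⁆ = c n m • b (Sum.inr (n + m)))
    (hXX : ∀ n m : ℤ, ⁅b (Sum.inr n), b (Sum.inr m)⁆ = 0)
    (hθ : ∀ x y z, θ ⁅x, y⁆ z = θ x ⁅y, z⁆) (a k m : ℤ) :
    c a k * θ (b (Sum.inr (a + k))) (b (Sum.inr m)) = 0 := by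
  have h := hθ (b (Sum.inl a)) (b (Sum.inr k)) (b (Sum.inr m))
  rwa [hLX, hXX, map_zero, map_smul, LinearMap.smul_apply, smul_eq_mul] at h

theorem apply_inr_inr_eq_zero [CharZero K]
    (hLX : ∀ n m : ℤ, ⁅b (Sum.inl n), b (Sum.inr m)⁆ = c n m • b (Sum.inr (n + m)))
    (hXX : ∀ n m : ℤ, ⁅b (Sum.inr n), b (Sum.inr m)⁆ = 0)
    (hc₀ : ∀ m : ℤ, c 0 m = m) (hθ : ∀ x y z, θ ⁅x, y⁆ z = θ x ⁅y, z⁆) {n m : ℤ}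
    (hnm : ¬(n = 0 ∧ m = 0)) : θ (b (Sum.inr n)) (b (Sum.inr m)) = 0 := by
  rcases eq_or_ne n 0 with rfl | hn
  · have hm : m ≠ 0 := fun hm => hnm ⟨rfl, hm⟩
    exact LieAlgebra.invariant_form_apply_eq_zero_of_eigen hθ (h := b (Sum.inl 0))
      (a := 0) (a' := m) (by simp [hLX, hc₀]) (by simp [hLX, hc₀]) (by simpa using hm)
  have h := mul_apply_inr_inr_eq_zero hLX hXX hθ 0 n m
  rw [hc₀, zero_add, mul_eq_zero] at h
  exact h.resolve_left (by exact_mod_cast hn)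

theorem apply_inr_zero_inr_zero_eq_zero
    (hLX : ∀ n m : ℤ, ⁅b (Sum.inl n), b (Sum.inr m)⁆ = c n m • b (Sum.inr (n + m)))
    (hXX : ∀ n m : ℤ, ⁅b (Sum.inr n), b (Sum.inr m)⁆ = 0)
    (hθ : ∀ x y z, θ ⁅x, y⁆ z = θ x ⁅y, z⁆) (hc : ∃ a, c a (-a) ≠ 0) :
    θ (b (Sum.inr 0)) (b (Sum.inr 0)) = 0 := by
  obtain ⟨a, ha⟩ := hc
  have h := mul_apply_inr_inr_eq_zero hLX hXX hθ a (-a) 0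
  rw [add_neg_cancel, mul_eq_zero] at h
  exact h.resolve_left ha

theorem eq_apply_inr_zero_inr_zero_smul_linMulLin [CharZero K]
    (hLL : ∀ n m : ℤ, ⁅b (Sum.inl n), b (Sum.inl m)⁆ = ((m : K) - n) • b (Sum.inl (n + m)))
    (hLX : ∀ n m : ℤ, ⁅b (Sum.inl n), b (Sum.inr m)⁆ = c n m • b (Sum.inr (n + m)))
    (hXX : ∀ n m : ℤ, ⁅b (Sum.inr n), b (Sum.inr m)⁆ = 0)
    (hc₀ : ∀ m : ℤ, c 0 m = m) (hc : c (-1) 0 * c 1 (-1) ≠ -2)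
    (hs : ∀ x y, θ x y = θ y x) (hθ : ∀ x y z, θ ⁅x, y⁆ z = θ x ⁅y, z⁆) :
    θ = θ (b (Sum.inr 0)) (b (Sum.inr 0)) •
      linMulLin (b.coord (Sum.inr 0)) (b.coord (Sum.inr 0)) := by
  refine ext_basis b fun i j => ?_
  rcases i with n | n <;> rcases j with m | m
  · simp [apply_inl_inl_eq_zero hLL hθ]
  · simp [apply_inl_inr_eq_zero hLL hLX hc₀ hc hθ]
  · simp [hs (b (Sum.inr n)), apply_inl_inr_eq_zero hLL hLX hc₀ hc hθ]
  · by_cases hnm : n = 0 ∧ m = 0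
    · obtain ⟨rfl, rfl⟩ := hnm
      simp
    · rw [apply_inr_inr_eq_zero hLX hXX hc₀ hθ hnm]
      rcases not_and_or.mp hnm with hn | hm <;> simp [Finsupp.single_apply, *]

theorem coord_inr_zero_lie_eq_zero
    (hLL : ∀ n m : ℤ, ⁅b (Sum.inl n), b (Sum.inl m)⁆ = ((m : K) - n) • b (Sum.inl (n + m)))
    (hLX : ∀ n m : ℤ, ⁅b (Sum.inl n), b (Sum.inr m)⁆ = c n m • b (Sum.inr (n + m)))
    (hXX : ∀ n m : ℤ, ⁅b (Sum.inr n), b (Sum.inr m)⁆ = 0)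
    (hc : ∀ n, c n (-n) = 0) (x y : L) : b.coord (Sum.inr 0) ⁅x, y⁆ = 0 := by
  let Ψ : L →ₗ[K] L →ₗ[K] K := LinearMap.mk₂ K (fun x y => b.coord (Sum.inr 0) ⁅x, y⁆)
    (by simp [add_lie]) (by simp [smul_lie]) (by simp [lie_add]) (by simp [lie_smul])
  have hcoord : ∀ n m : ℤ, b.coord (Sum.inr 0) ⁅b (Sum.inl n), b (Sum.inr m)⁆ = 0 := by
    intro n m
    rcases eq_or_ne (n + m) 0 with h | h
    · obtain rfl : m = -n := by omega
      simp [hLX, hc]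
    · simp [hLX, h]
  have hΨ : Ψ = 0 := by
    refine ext_basis b fun i j => ?_
    rcases i with n | n <;> rcases j with m | m
    · simp [Ψ, hLL]
    · exact hcoord n m
    · simp only [Ψ, LinearMap.mk₂_apply, LinearMap.zero_apply]
      rw [← lie_skew, map_neg, hcoord, neg_zero]
    · simp [Ψ, hXX]
  exact congr($hΨ x y)

end WittExtension

open WittExtension

theorem lamTerm_zero (lam : Option ℂ) : lamTerm lam 0 = 0 := by
  cases lam <;> simp [lamTerm]

def coeffA (lam : Option ℂ) (n m : ℤ) : ℂ :=
  n + m + if m = 0 then lamTerm lam n else 0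

def coeffB (lam : Option ℂ) (n m : ℤ) : ℂ :=
  m - if n + m = 0 then lamTerm lam n else 0

theorem coeffA_zero_left (lam : Option ℂ) (m : ℤ) : coeffA lam 0 m = m := by
  simp [coeffA, lamTerm_zero]

theorem coeffA_neg_right (lam : Option ℂ) (n : ℤ) : coeffA lam n (-n) = 0 := by
  rcases eq_or_ne n 0 with rfl | hn
  · simp [coeffA, lamTerm_zero]
  · simp [coeffA, hn]

theorem coeffB_zero_left (lam : Option ℂ) (m : ℤ) : coeffB lam 0 m = m := by
  rcases eq_or_ne m 0 with rfl | hm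
  · simp [coeffB, lamTerm_zero]
  · simp [coeffB, hm]

theorem coeffB_neg_one_zero (lam : Option ℂ) : coeffB lam (-1) 0 = 0 := by
  cases lam <;> norm_num [coeffB, lamTerm]

theorem exists_coeffB_neg_ne_zero (lam : Option ℂ) : ∃ a, coeffB lam a (-a) ≠ 0 := by
  cases lam with
  | none => exact ⟨1, by norm_num [coeffB, lamTerm]⟩
  | some l =>
    -- `coeffB (some l) a (-a) = -a - a(a+1)l`, and `(-2 - 6l) - 3(-1 - 2l) = 1`
    by_contra! h
    have h₁ := h 1
    have h₂ := h 2
    norm_num [coeffB, lamTerm] at h₁ h₂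
    exact one_ne_zero (by linear_combination h₂ - 3 * h₁ : (1 : ℂ) = 0)

/-- every symmetric invariant bilinear form on `W_B(λ)` is zero, while the
space of symmetric invariant bilinear forms on `W_A(λ)` is one-dimensional, spanned by the
form `θ_A` with `θ_A(A_0, A_0) = 1` which vanishes on all other pairs of basis vectors. -/
theorem stmt_11 (lam : Option ℂ)
    (LA : Type) [LieRing LA] [LieAlgebra ℂ LA] (bA : Module.Basis (ℤ ⊕ ℤ) ℂ LA)
    (hLLA : ∀ n m : ℤ,
      ⁅bA (Sum.inl n), bA (Sum.inl m)⁆ = ((m : ℂ) - (n : ℂ)) • bA (Sum.inl (n + m)))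
    (hLA : ∀ n m : ℤ,
      ⁅bA (Sum.inl n), bA (Sum.inr m)⁆ =
        ((n : ℂ) + (m : ℂ) + (if m = 0 then lamTerm lam n else 0)) • bA (Sum.inr (n + m)))
    (hAA : ∀ n m : ℤ, ⁅bA (Sum.inr n), bA (Sum.inr m)⁆ = 0)
    (LB : Type) [LieRing LB] [LieAlgebra ℂ LB] (bB : Module.Basis (ℤ ⊕ ℤ) ℂ LB)
    (hLLB : ∀ n m : ℤ,
      ⁅bB (Sum.inl n), bB (Sum.inl m)⁆ = ((m : ℂ) - (n : ℂ)) • bB (Sum.inl (n + m)))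
    (hLB : ∀ n m : ℤ,
      ⁅bB (Sum.inl n), bB (Sum.inr m)⁆ =
        ((m : ℂ) - (if n + m = 0 then lamTerm lam n else 0)) • bB (Sum.inr (n + m)))
    (hBB : ∀ n m : ℤ, ⁅bB (Sum.inr n), bB (Sum.inr m)⁆ = 0) :
    (∀ θ : LB →ₗ[ℂ] LB →ₗ[ℂ] ℂ, (∀ x y : LB, θ x y = θ y x) →
      (∀ x y z : LB, θ ⁅x, y⁆ z = θ x ⁅y, z⁆) → θ = 0) ∧
    (∀ θ : LA →ₗ[ℂ] LA →ₗ[ℂ] ℂ, (∀ x y : LA, θ x y = θ y x) →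
      (∀ x y z : LA, θ ⁅x, y⁆ z = θ x ⁅y, z⁆) →
      ∃ c : ℂ, ∀ x y : LA,
        θ x y = c * (bA.repr x (Sum.inr 0) * bA.repr y (Sum.inr 0))) ∧
    (∃ θA : LA →ₗ[ℂ] LA →ₗ[ℂ] ℂ,
      (∀ x y : LA, θA x y = θA y x) ∧
      (∀ x y z : LA, θA ⁅x, y⁆ z = θA x ⁅y, z⁆) ∧
      θA (bA (Sum.inr 0)) (bA (Sum.inr 0)) = 1 ∧
      (∀ n m : ℤ, θA (bA (Sum.inl n)) (bA (Sum.inl m)) = 0) ∧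
      (∀ n m : ℤ, θA (bA (Sum.inl n)) (bA (Sum.inr m)) = 0) ∧
      (∀ n m : ℤ, ¬(n = 0 ∧ m = 0) → θA (bA (Sum.inr n)) (bA (Sum.inr m)) = 0)) := by
  have hcA : coeffA lam (-1) 0 * coeffA lam 1 (-1) ≠ -2 := by simp [coeffA_neg_right]
  have hcB : coeffB lam (-1) 0 * coeffB lam 1 (-1) ≠ -2 := by simp [coeffB_neg_one_zero]
  have hcoordA := coord_inr_zero_lie_eq_zero (c := coeffA lam) hLLA hLA hAA (coeffA_neg_right lam)
  refine ⟨fun θ hs hθ => ?_, fun θ hs hθ => ?_, ?_⟩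
  · rw [eq_apply_inr_zero_inr_zero_smul_linMulLin hLLB hLB hBB (coeffB_zero_left lam) hcB hs hθ,
      apply_inr_zero_inr_zero_eq_zero hLB hBB hθ (exists_coeffB_neg_ne_zero lam), zero_smul]
  · refine ⟨θ (bA (Sum.inr 0)) (bA (Sum.inr 0)), fun x y => ?_⟩
    rw [eq_apply_inr_zero_inr_zero_smul_linMulLin hLLA hLA hAA (coeffA_zero_left lam) hcA hs hθ]
    simp
  · refine ⟨linMulLin (bA.coord (Sum.inr 0)) (bA.coord (Sum.inr 0)), fun x y => mul_comm _ _,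
      fun x y z => by simp only [linMulLin_apply, hcoordA, zero_mul, mul_zero], by simp,
      by simp, by simp, fun n m hnm => ?_⟩
    rcases not_and_or.mp hnm with hn | hm <;> simp [Finsupp.single_apply, *]
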